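/- Let p > 1. Then the function f(x) = sin_p(x)/x is strictly decreasing on (0, π_p/2), with f(x) → 1 as x → 0⁺ and f(x) → 2/π_p as x → (π_p/2)⁻. In particular, for all x ∈ (0, 1), x/arcsin_p(x) < sin_p(x)/x < (2x/π_p)/arcsin_p(2x/π_p). -/

import Mathlib

open Real Set Filter Topology

/-- Generalized inverse sine: `arcsin_p x = ∫₀ˣ (1 - tᵖ)^(-1/p) dt`. -/
noncomputable def arcsinp (p : ℝ) (x : ℝ) : ℝ := ∫ t in (0:ℝ)..x, (1 - t ^ p) ^ (-1 / p)

/-- Generalized π: `π_p = 2 · arcsin_p 1`. -/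
noncomputable def pip (p : ℝ) : ℝ := 2 * arcsinp p 1

/-- Generalized sine: the inverse of `arcsinp p` (as a map from `[0,1]`). -/
noncomputable def sinp (p : ℝ) : ℝ → ℝ := Function.invFunOn (arcsinp p) (Set.Icc 0 1)

/-- Generalized cosine. -/
noncomputable def cosp (p : ℝ) (x : ℝ) : ℝ := (1 - (sinp p x) ^ p) ^ (1 / p)

/-- Generalized tangent. -/
noncomputable def tanp (p : ℝ) (x : ℝ) : ℝ := sinp p x / cosp p x

/-- Generalized inverse hyperbolic sine: `arsinh_p x = ∫₀ˣ (1 + tᵖ)^(-1/p) dt`. -/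
noncomputable def arsinhp (p : ℝ) (x : ℝ) : ℝ := ∫ t in (0:ℝ)..x, (1 + t ^ p) ^ (-1 / p)

/-- Generalized hyperbolic sine: the inverse of `arsinhp p` (as a map from `[0,∞)`). -/
noncomputable def sinhp (p : ℝ) : ℝ → ℝ := Function.invFunOn (arsinhp p) (Set.Ici 0)

/-- Generalized hyperbolic cosine. -/
noncomputable def coshp (p : ℝ) (x : ℝ) : ℝ := (1 + (sinhp p x) ^ p) ^ (1 / p)

/-- Generalized hyperbolic tangent. -/
noncomputable def tanhp (p : ℝ) (x : ℝ) : ℝ := sinhp p x / coshp p x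

/-!
Substituting `t = x s` gives `arcsin_p x / x = ∫₀¹ (1 - (x s)ᵖ)^(-1/p) ds`, the mean of an
increasing integrand, so `arcsin_p x / x` increases strictly on `(0, 1]`. Since
`sin_p x / x = y / arcsin_p y` for `y = sin_p x`, and `sin_p` is increasing, `sin_p x / x`
decreases strictly on `(0, π_p/2)`. The limit at `0` is `1 / arcsin_p'(0) = 1`; at `π_p/2` the
monotone inverse `sin_p` is continuous with value `1`. The two inequalities compare the values of
`sin_p x / x` at `x` with those at `arcsin_p x > x` and at `arcsin_p (2x/π_p) < x`.
-/

open MeasureTheory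

theorem StrictMonoOn.strictMonoOn_integral_div {f : ℝ → ℝ} {b : ℝ}
    (hf : StrictMonoOn f (Ico 0 b)) (hfi : IntervalIntegrable f volume 0 b) :
    StrictMonoOn (fun x => (∫ t in (0:ℝ)..x, f t) / x) (Ioc 0 b) := by
  have rescale : ∀ x ∈ Ioc 0 b,
      (∫ t in (0:ℝ)..x, f t) / x = ∫ s in (0:ℝ)..1, f (x * s) := by
    intro x hx
    rw [intervalIntegral.integral_comp_mul_left f hx.1.ne', mul_zero, mul_one, smul_eq_mul,
      div_eq_inv_mul]
  have integrable : ∀ x ∈ Ioc 0 b, IntervalIntegrable (fun s => f (x * s)) volume 0 1 := by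
    intro x hx
    have hsub : uIcc 0 x ⊆ uIcc 0 b := uIcc_subset_uIcc left_mem_uIcc
      (by rw [uIcc_of_le (hx.1.le.trans hx.2)]; exact ⟨hx.1.le, hx.2⟩)
    simpa [div_self hx.1.ne'] using (hfi.mono_set hsub).comp_mul_left (c := x)
  intro a ha c hc hac
  simp only [rescale a ha, rescale c hc]
  have hpos : 0 < ∫ s in (0:ℝ)..1, (f (c * s) - f (a * s)) := by
    refine intervalIntegral.intervalIntegral_pos_of_pos_on
      ((integrable c hc).sub (integrable a ha)) (fun s hs => ?_) one_pos
    have has : a * s ∈ Ico 0 b := ⟨by nlinarith [ha.1, hs.1], by nlinarith [ha.1, ha.2, hs.2]⟩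
    have hcs : c * s ∈ Ico 0 b := ⟨by nlinarith [hc.1, hs.1], by nlinarith [hc.2, hs.2, hc.1]⟩
    exact sub_pos.2 (hf has hcs (by nlinarith [hs.1]))
  rw [intervalIntegral.integral_sub (integrable c hc) (integrable a ha)] at hpos
  linarith

noncomputable def arcsinpIntegrand (p t : ℝ) : ℝ := (1 - t ^ p) ^ (-1 / p)

theorem arcsinp_eq_integral (p x : ℝ) : arcsinp p x = ∫ t in (0:ℝ)..x, arcsinpIntegrand p t :=
  rfl

theorem arcsinp_zero (p : ℝ) : arcsinp p 0 = 0 := intervalIntegral.integral_same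

section Integrand

variable {p : ℝ}

theorem arcsinpIntegrand_zero (hp : p ≠ 0) : arcsinpIntegrand p 0 = 1 := by
  simp [arcsinpIntegrand, zero_rpow hp]

theorem arcsinpIntegrand_strictMonoOn (hp : 0 < p) : StrictMonoOn (arcsinpIntegrand p) (Ico 0 1) :=
  fun s hs t ht hst => by
    have hsp : s ^ p < t ^ p := rpow_lt_rpow hs.1 hst hp
    have htp : t ^ p < 1 := rpow_lt_one ht.1 ht.2 hp
    exact rpow_lt_rpow_of_neg (by linarith) (by linarith) (by simp [neg_div, hp])

theorem one_lt_arcsinpIntegrand (hp : 0 < p) {t : ℝ} (h0 : 0 < t) (h1 : t < 1) :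
    1 < arcsinpIntegrand p t := by
  simpa [arcsinpIntegrand_zero hp.ne'] using
    arcsinpIntegrand_strictMonoOn hp ⟨le_rfl, zero_lt_one⟩ ⟨h0.le, h1⟩ h0

theorem arcsinpIntegrand_continuousOn (hp : 0 < p) :
    ContinuousOn (arcsinpIntegrand p) (Ico 0 1) := fun _ ht =>
  ((continuous_const.sub (continuous_rpow_const hp.le)).continuousAt.rpow_const
    (Or.inl (sub_ne_zero.2 (rpow_lt_one ht.1 ht.2 hp).ne'))).continuousWithinAt

theorem arcsinpIntegrand_intervalIntegrable (hp : 1 < p) :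
    IntervalIntegrable (arcsinpIntegrand p) volume 0 1 := by
  have hp0 : 0 < p := one_pos.trans hp
  have hexp : -1 / p < 0 := by simp [neg_div, hp0]
  have hdom : IntervalIntegrable (fun t : ℝ => (1 - t) ^ (-1 / p)) volume 0 1 := by
    have h := (intervalIntegral.intervalIntegrable_rpow' (a := 1) (b := 0)
      (r := -1 / p) (by rw [neg_div, neg_lt_neg_iff, div_lt_one hp0]; exact hp)).comp_sub_left 1
    simpa using h
  rw [intervalIntegrable_iff_integrableOn_Ioo_of_le zero_le_one] at hdom ⊢
  refine Integrable.mono' hdom ?_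
    ((ae_restrict_iff' measurableSet_Ioo).2 (ae_of_all _ fun t ⟨ht0, ht1⟩ => ?_))
  · exact ((arcsinpIntegrand_continuousOn hp0).mono Ioo_subset_Ico_self).aestronglyMeasurable
      measurableSet_Ioo
  · have htp : t ^ p ≤ t := by
      simpa using rpow_le_rpow_of_exponent_ge ht0 ht1.le hp.le
    rw [arcsinpIntegrand, norm_of_nonneg (rpow_nonneg (by linarith) _)]
    exact rpow_le_rpow_of_nonpos (by linarith) (by linarith) hexp.le

end Integrand

section Arcsinp

variable {p : ℝ} (hp : 1 < p)
include hp

theorem arcsinpIntegrand_intervalIntegrable_of_mem {a b : ℝ} (ha : a ∈ Icc (0:ℝ) 1)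
    (hb : b ∈ Icc (0:ℝ) 1) : IntervalIntegrable (arcsinpIntegrand p) volume a b :=
  (arcsinpIntegrand_intervalIntegrable hp).mono_set
    (by rw [uIcc_of_le zero_le_one]; exact uIcc_subset_Icc ha hb)

theorem arcsinp_strictMonoOn : StrictMonoOn (arcsinp p) (Icc 0 1) := by
  intro a ha b hb hab
  have hsplit := intervalIntegral.integral_add_adjacent_intervals
    (arcsinpIntegrand_intervalIntegrable_of_mem hp ⟨le_rfl, zero_le_one⟩ ha)
    (arcsinpIntegrand_intervalIntegrable_of_mem hp ha hb)
  have hpos : 0 < ∫ t in a..b, arcsinpIntegrand p t :=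
    intervalIntegral.intervalIntegral_pos_of_pos_on
      (arcsinpIntegrand_intervalIntegrable_of_mem hp ha hb)
      (fun t ht => one_pos.trans (one_lt_arcsinpIntegrand (one_pos.trans hp)
        (ha.1.trans_lt ht.1) (ht.2.trans_le hb.2))) hab
  rw [arcsinp_eq_integral, arcsinp_eq_integral]
  linarith

theorem arcsinp_continuousOn : ContinuousOn (arcsinp p) (Icc 0 1) := by
  have h := intervalIntegral.continuousOn_primitive_interval'
    (arcsinpIntegrand_intervalIntegrable hp) left_mem_uIcc
  rwa [uIcc_of_le zero_le_one] at h

theorem lt_arcsinp {x : ℝ} (h0 : 0 < x) (h1 : x ≤ 1) : x < arcsinp p x := by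
  have hint :=
    arcsinpIntegrand_intervalIntegrable_of_mem hp ⟨le_rfl, zero_le_one⟩ ⟨h0.le, h1⟩
  have hpos : 0 < ∫ t in (0:ℝ)..x, (arcsinpIntegrand p t - 1) :=
    intervalIntegral.intervalIntegral_pos_of_pos_on (hint.sub intervalIntegrable_const)
      (fun t ht => sub_pos.2 (one_lt_arcsinpIntegrand (one_pos.trans hp) ht.1
        (ht.2.trans_le h1))) h0
  rw [intervalIntegral.integral_sub hint intervalIntegrable_const,
    intervalIntegral.integral_const, smul_eq_mul, mul_one, sub_zero] at hpos
  rw [arcsinp_eq_integral]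
  linarith

theorem one_lt_arcsinp_one : 1 < arcsinp p 1 := lt_arcsinp hp one_pos le_rfl

theorem arcsinp_div_self_strictMonoOn : StrictMonoOn (fun x => arcsinp p x / x) (Ioc 0 1) :=
  ((arcsinpIntegrand_strictMonoOn (one_pos.trans hp)).strictMonoOn_integral_div
    (arcsinpIntegrand_intervalIntegrable hp))

theorem div_arcsinp_strictAntiOn : StrictAntiOn (fun y => y / arcsinp p y) (Ioc 0 1) := by
  have h := strictAntiOn_inv_pos.comp_strictMonoOn (arcsinp_div_self_strictMonoOn hp)
    fun y hy => div_pos (hy.1.trans (lt_arcsinp hp hy.1 hy.2)) hy.1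
  exact h.congr fun y _ => by simp [inv_div]

theorem arcsinp_lt_mul {y : ℝ} (h0 : 0 < y) (h1 : y < 1) : arcsinp p y < arcsinp p 1 * y := by
  have h : arcsinp p y / y < arcsinp p 1 / 1 :=
    arcsinp_div_self_strictMonoOn hp ⟨h0, h1.le⟩ ⟨one_pos, le_rfl⟩ h1
  rwa [div_one, div_lt_iff₀ h0] at h

theorem tendsto_div_arcsinp_zero : Tendsto (fun y => y / arcsinp p y) (𝓝[>] 0) (𝓝 1) := by
  have hcont := arcsinpIntegrand_continuousOn (one_pos.trans hp)
  have hnhds : Ico (0:ℝ) 1 ∈ 𝓝[>] 0 := Ico_mem_nhdsGT one_pos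
  have hderiv : HasDerivWithinAt (arcsinp p) 1 (Ioi 0) 0 := by
    have h := intervalIntegral.integral_hasDerivWithinAt_right (s := Ici 0) (t := Ioi 0)
      IntervalIntegrable.refl
      ((hcont.stronglyMeasurableAtFilter_nhdsWithin measurableSet_Ico 0).filter_mono
        (nhdsWithin_le_of_mem hnhds))
      ((hcont 0 ⟨le_rfl, one_pos⟩).mono_of_mem_nhdsWithin hnhds)
    rw [arcsinpIntegrand_zero (one_pos.trans hp).ne'] at h
    exact h.mono Ioi_subset_Ici_self
  have hslope := ((hasDerivWithinAt_iff_tendsto_slope' (lt_irrefl 0)).1 hderiv).inv₀ one_ne_zero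
  rw [inv_one] at hslope
  exact hslope.congr fun y => by rw [slope_def_field, arcsinp_zero, sub_zero, sub_zero, inv_div]

end Arcsinp

section Sinp

variable {p : ℝ} (hp : 1 < p)
include hp

theorem arcsinp_bijOn : BijOn (arcsinp p) (Icc 0 1) (Icc 0 (arcsinp p 1)) := by
  refine ⟨fun y hy => ?_, (arcsinp_strictMonoOn hp).injOn, ?_⟩
  · have hmono := (arcsinp_strictMonoOn hp).monotoneOn
    exact ⟨arcsinp_zero p ▸ hmono ⟨le_rfl, zero_le_one⟩ hy hy.1,
      hmono hy ⟨zero_le_one, le_rfl⟩ hy.2⟩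
  · simpa [SurjOn, arcsinp_zero] using
      intermediate_value_Icc zero_le_one (arcsinp_continuousOn hp)

theorem sinp_bijOn : BijOn (sinp p) (Icc 0 (arcsinp p 1)) (Icc 0 1) :=
  BijOn.symm (arcsinp_bijOn hp).invOn_invFunOn.symm (arcsinp_bijOn hp)

theorem arcsinp_sinp {x : ℝ} (hx : x ∈ Icc 0 (arcsinp p 1)) : arcsinp p (sinp p x) = x :=
  (arcsinp_bijOn hp).invOn_invFunOn.2 hx

theorem sinp_arcsinp {y : ℝ} (hy : y ∈ Icc (0:ℝ) 1) : sinp p (arcsinp p y) = y :=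
  (arcsinp_bijOn hp).invOn_invFunOn.1 hy

theorem sinp_strictMonoOn : StrictMonoOn (sinp p) (Icc 0 (arcsinp p 1)) := fun x hx y hy hxy =>
  ((arcsinp_strictMonoOn hp).lt_iff_lt ((sinp_bijOn hp).mapsTo hx)
    ((sinp_bijOn hp).mapsTo hy)).1 (by rwa [arcsinp_sinp hp hx, arcsinp_sinp hp hy])

theorem sinp_zero : sinp p 0 = 0 := by
  simpa [arcsinp_zero] using sinp_arcsinp hp (y := 0) ⟨le_rfl, zero_le_one⟩

theorem sinp_arcsinp_one : sinp p (arcsinp p 1) = 1 := sinp_arcsinp hp ⟨zero_le_one, le_rfl⟩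

theorem sinp_mapsTo_Ioo : MapsTo (sinp p) (Ioo 0 (arcsinp p 1)) (Ioo 0 1) := fun x hx => by
  have hA := (one_pos.trans (one_lt_arcsinp_one hp)).le
  have h0 := sinp_strictMonoOn hp ⟨le_rfl, hA⟩ (Ioo_subset_Icc_self hx) hx.1
  have h1 := sinp_strictMonoOn hp (Ioo_subset_Icc_self hx) ⟨hA, le_rfl⟩ hx.2
  rw [sinp_zero hp] at h0
  rw [sinp_arcsinp_one hp] at h1
  exact ⟨h0, h1⟩

theorem sinp_continuousWithinAt_zero : ContinuousWithinAt (sinp p) (Ici 0) 0 :=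
  (sinp_strictMonoOn hp).continuousWithinAt_right_of_image_mem_nhdsWithin
    (Icc_mem_nhdsGE (one_pos.trans (one_lt_arcsinp_one hp)))
    (by rw [(sinp_bijOn hp).image_eq, sinp_zero hp]; exact Icc_mem_nhdsGE one_pos)

theorem sinp_continuousWithinAt_arcsinp_one :
    ContinuousWithinAt (sinp p) (Iic (arcsinp p 1)) (arcsinp p 1) :=
  (sinp_strictMonoOn hp).continuousWithinAt_left_of_image_mem_nhdsWithin
    (Icc_mem_nhdsLE (one_pos.trans (one_lt_arcsinp_one hp)))
    (by rw [(sinp_bijOn hp).image_eq, sinp_arcsinp_one hp]; exact Icc_mem_nhdsLE one_pos)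

end Sinp

section SinpDivSelf

variable {p : ℝ} (hp : 1 < p)
include hp

theorem sinp_div_self_strictAntiOn :
    StrictAntiOn (fun x => sinp p x / x) (Ioo 0 (arcsinp p 1)) :=
  ((div_arcsinp_strictAntiOn hp).comp_strictMonoOn
    ((sinp_strictMonoOn hp).mono Ioo_subset_Icc_self)
    fun _ hx => Ioo_subset_Ioc_self (sinp_mapsTo_Ioo hp hx)).congr fun x hx => by
      simp only [Function.comp, arcsinp_sinp hp (Ioo_subset_Icc_self hx)]

theorem tendsto_sinp_div_self_zero : Tendsto (fun x => sinp p x / x) (𝓝[>] 0) (𝓝 1) := by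
  have hnhds : Ioo 0 (arcsinp p 1) ∈ 𝓝[>] 0 :=
    Ioo_mem_nhdsGT (one_pos.trans (one_lt_arcsinp_one hp))
  have hsinp : Tendsto (sinp p) (𝓝[>] 0) (𝓝[>] 0) := by
    refine tendsto_nhdsWithin_iff.2 ⟨?_, ?_⟩
    · simpa [sinp_zero hp] using
        ((sinp_continuousWithinAt_zero hp).mono Ioi_subset_Ici_self).tendsto
    · filter_upwards [hnhds] with x hx using (sinp_mapsTo_Ioo hp hx).1
  refine ((tendsto_div_arcsinp_zero hp).comp hsinp).congr' ?_
  filter_upwards [hnhds] with x hx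
  simp only [Function.comp, arcsinp_sinp hp (Ioo_subset_Icc_self hx)]

theorem tendsto_sinp_div_self_arcsinp_one :
    Tendsto (fun x => sinp p x / x) (𝓝[<] (arcsinp p 1)) (𝓝 (1 / arcsinp p 1)) := by
  have h := ((sinp_continuousWithinAt_arcsinp_one hp).mono Iio_subset_Iic_self).tendsto
  rw [sinp_arcsinp_one hp] at h
  exact h.div (tendsto_id.mono_left nhdsWithin_le_nhds)
    (one_pos.trans (one_lt_arcsinp_one hp)).ne'

theorem div_arcsinp_lt_sinp_div_self {x : ℝ} (hx : x ∈ Ioo 0 1) :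
    x / arcsinp p x < sinp p x / x := by
  have hA := one_lt_arcsinp_one hp
  have hlt := lt_arcsinp hp hx.1 hx.2.le
  have hmem : arcsinp p x ∈ Ioo 0 (arcsinp p 1) := ⟨hx.1.trans hlt,
    arcsinp_strictMonoOn hp (Ioo_subset_Icc_self hx) ⟨zero_le_one, le_rfl⟩ hx.2⟩
  simpa only [sinp_arcsinp hp (Ioo_subset_Icc_self hx)] using
    sinp_div_self_strictAntiOn hp ⟨hx.1, hx.2.trans hA⟩ hmem hlt

theorem sinp_div_self_lt {x : ℝ} (hx : x ∈ Ioo 0 1) :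
    sinp p x / x < x / arcsinp p 1 / arcsinp p (x / arcsinp p 1) := by
  have hA := one_lt_arcsinp_one hp
  have hy : x / arcsinp p 1 ∈ Ioo 0 1 :=
    ⟨div_pos hx.1 (one_pos.trans hA), (div_lt_self hx.1 hA).trans hx.2⟩
  have hlt : arcsinp p (x / arcsinp p 1) < x := by
    simpa [mul_div_cancel₀ _ (one_pos.trans hA).ne'] using arcsinp_lt_mul hp hy.1 hy.2
  have hmem : arcsinp p (x / arcsinp p 1) ∈ Ioo 0 (arcsinp p 1) :=
    ⟨hy.1.trans (lt_arcsinp hp hy.1 hy.2.le), hlt.trans (hx.2.trans hA)⟩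
  simpa only [sinp_arcsinp hp (Ioo_subset_Icc_self hy)] using
    sinp_div_self_strictAntiOn hp hmem ⟨hx.1, hx.2.trans hA⟩ hlt

end SinpDivSelf

theorem stmt16 (p : ℝ) (hp : 1 < p) :
    StrictAntiOn (fun x => sinp p x / x) (Set.Ioo 0 (pip p / 2)) ∧
    Tendsto (fun x => sinp p x / x) (𝓝[>] 0) (𝓝 1) ∧
    Tendsto (fun x => sinp p x / x) (𝓝[<] (pip p / 2)) (𝓝 (2 / pip p)) ∧
    ∀ x ∈ Set.Ioo (0:ℝ) 1,
      x / arcsinp p x < sinp p x / x ∧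
      sinp p x / x < (2 * x / pip p) / arcsinp p (2 * x / pip p) := by
  have hhalf : pip p / 2 = arcsinp p 1 := by rw [pip]; ring
  have htwo_div : 2 / pip p = 1 / arcsinp p 1 := by
    rw [pip, div_mul_eq_div_div, div_self two_ne_zero]
  rw [hhalf, htwo_div]
  refine ⟨sinp_div_self_strictAntiOn hp, tendsto_sinp_div_self_zero hp,
    tendsto_sinp_div_self_arcsinp_one hp, fun x hx => ?_⟩
  rw [pip, mul_div_mul_left x _ two_ne_zero]
  exact ⟨div_arcsinp_lt_sinp_div_self hp hx, sinp_div_self_lt hp hx⟩
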